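/- Let K be a complete discrete valuation field of characteristic 0 with perfect residue field of characteristic p > 0, and let φ(T) = a₁T + a₂T² + ⋯ be an isogeny of formal groups over O_K of height 1. Then for every index m with p ∤ m, the coefficient a₁ divides a_m in O_K. -/

import Mathlib

/-- Data of a normalized discrete (additive) valuation on a field `K`:
`v : K → ℤ ∪ {∞}` with `v(x) = ∞ ↔ x = 0`, multiplicative, ultrametric and surjective
(so `K` is a discrete valuation field, `O_K = {v ≥ 0}`, `m_K = {v > 0}`). -/
structure DVF (K : Type) [Field K] where
  v : K → WithTop ℤ
  v_top_iff : ∀ x : K, v x = ⊤ ↔ x = 0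
  v_mul : ∀ x y : K, v (x * y) = v x + v y
  v_add : ∀ x y : K, min (v x) (v y) ≤ v (x + y)
  v_surj : ∀ n : ℤ, ∃ x : K, v x = (n : WithTop ℤ)

namespace DVF

variable {K : Type} [Field K] (V : DVF K)

/-- The sequence `s` converges to `L` in the valuation topology of `V`. -/
def Tendsto (s : ℕ → K) (L : K) : Prop :=
  ∀ N : ℤ, ∃ M : ℕ, ∀ m : ℕ, M ≤ m → (N : WithTop ℤ) ≤ V.v (s m - L)

/-- `K` is complete with respect to the valuation `V`: every Cauchy sequence converges. -/
def IsComplete : Prop :=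
  ∀ s : ℕ → K,
    (∀ N : ℤ, ∃ M : ℕ, ∀ m k : ℕ, M ≤ m → M ≤ k → (N : WithTop ℤ) ≤ V.v (s m - s k)) →
    ∃ L : K, V.Tendsto s L

/-- The residue field `O_K/m_K` (of characteristic `p`) is perfect:
every residue class is a `p`-th power. -/
def ResiduePerfect (p : ℕ) : Prop :=
  ∀ x : K, 0 ≤ V.v x → ∃ y : K, 0 ≤ V.v y ∧ 0 < V.v (x - y ^ p)

/-- The residue field `O_K/m_K` is finite. -/
def ResidueFinite : Prop :=
  ∃ S : Finset K, ∀ x : K, 0 ≤ V.v x → ∃ y ∈ S, 0 < V.v (x - y)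

/-- `K` is Henselian: simple roots of integral polynomials lift from the residue field. -/
def IsHenselian : Prop :=
  ∀ f : Polynomial K, (∀ i : ℕ, 0 ≤ V.v (f.coeff i)) →
    ∀ a : K, 0 ≤ V.v a → 0 < V.v (f.eval a) → V.v (f.derivative.eval a) = 0 →
      ∃ b : K, f.eval b = 0 ∧ 0 < V.v (b - a)

end DVF

/-- `y` is the value of the one-variable power series `φ` at `x` (limit of partial sums). -/
def PSEval {K : Type} [Field K] (V : DVF K) (φ : PowerSeries K) (x y : K) : Prop :=
  V.Tendsto (fun n => ∑ i ∈ Finset.range n, PowerSeries.coeff i φ * x ^ i) y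

/-- `z` is the value of the two-variable power series `F` at `(x, y)`. -/
def FEval {K : Type} [Field K] (V : DVF K) (F : MvPowerSeries (Fin 2) K) (x y z : K) : Prop :=
  V.Tendsto (fun n => ∑ i ∈ Finset.range n, ∑ j ∈ Finset.range n,
    MvPowerSeries.coeff (Finsupp.single 0 i + Finsupp.single 1 j) F * x ^ i * y ^ j) z

/-- A one-dimensional commutative formal group law `F(X,Y)` over the valuation ring `O_K`
(integral coefficients, `F ≡ X + Y` mod degree 2, commutative and associative;
associativity `F(F(X,Y),Z) = F(X,F(Y,Z))` is written out coefficientwise). -/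
structure FGL (K : Type) [Field K] (V : DVF K) where
  F : MvPowerSeries (Fin 2) K
  int_coeff : ∀ d : Fin 2 →₀ ℕ, 0 ≤ V.v (MvPowerSeries.coeff d F)
  const : MvPowerSeries.coeff 0 F = 0
  linX : MvPowerSeries.coeff (Finsupp.single 0 1) F = 1
  linY : MvPowerSeries.coeff (Finsupp.single 1 1) F = 1
  comm : ∀ d : Fin 2 →₀ ℕ,
    MvPowerSeries.coeff d F = MvPowerSeries.coeff (Finsupp.equivMapDomain (Equiv.swap 0 1) d) F
  assoc : ∀ i j l : ℕ,
    (∑ k ∈ Finset.range (i + j + 1),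
      MvPowerSeries.coeff (Finsupp.single 0 k + Finsupp.single 1 l) F *
        MvPowerSeries.coeff (Finsupp.single 0 i + Finsupp.single 1 j) (F ^ k)) =
    (∑ k ∈ Finset.range (j + l + 1),
      MvPowerSeries.coeff (Finsupp.single 0 i + Finsupp.single 1 k) F *
        MvPowerSeries.coeff (Finsupp.single 0 j + Finsupp.single 1 l) (F ^ k))

/-- An isogeny `φ : F → G` of formal groups over `O_K`: a nonzero integral power series
with `φ(0) = 0` and `φ(F(X,Y)) = G(φ(X),φ(Y))` (written out coefficientwise). -/
structure Isog {K : Type} [Field K] (V : DVF K) (Fg Gg : FGL K V) where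
  φ : PowerSeries K
  ne_zero : φ ≠ 0
  int_coeff : ∀ i : ℕ, 0 ≤ V.v (PowerSeries.coeff i φ)
  const : PowerSeries.coeff 0 φ = 0
  hom : ∀ i j : ℕ,
    (∑ k ∈ Finset.range (i + j + 1),
      PowerSeries.coeff k φ *
        MvPowerSeries.coeff (Finsupp.single 0 i + Finsupp.single 1 j) (Fg.F ^ k)) =
    (∑ k ∈ Finset.range (i + j + 1), ∑ l ∈ Finset.range (i + j + 1),
      MvPowerSeries.coeff (Finsupp.single 0 k + Finsupp.single 1 l) Gg.F *
        PowerSeries.coeff i (φ ^ k) * PowerSeries.coeff j (φ ^ l))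

/-- The power series `φ` has height `n`: `φ(T) ≡ ψ(T^{p^n}) (mod m_K)`
for some integral `ψ` with `v(ψ'(0)) = 0`. -/
def HasHeight {K : Type} [Field K] (V : DVF K) (p n : ℕ) (φ : PowerSeries K) : Prop :=
  ∃ ψ : PowerSeries K, (∀ i : ℕ, 0 ≤ V.v (PowerSeries.coeff i ψ)) ∧
    V.v (PowerSeries.coeff 1 ψ) = 0 ∧
    ∀ j : ℕ, 0 < V.v (PowerSeries.coeff j φ -
      (if p ^ n ∣ j then PowerSeries.coeff (j / p ^ n) ψ else 0))

/-!
Comparing the coefficients of `X^i Y` in `φ(F(X,Y)) = G(φ(X),φ(Y))` gives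
`φ'(F(X,0)) · ∂F/∂Y(X,0) = a₁ · ∂G/∂Y(φ(X),0)`. Since `F(X,0) = X + ⋯` and
`∂F/∂Y(X,0) = 1 + ⋯`, the coefficient of `X^(n-1)` on the left is `n aₙ` plus an integral
combination of the `k a_k` with `k < n`, so induction on `n` shows `a₁ ∣ n aₙ` in `O_K`.
If `p ∤ n` then `n` is a unit of `O_K`, the residue characteristic being `p`.
-/

namespace MvPowerSeries

open Finsupp

def finTwoEquivOptionUnit : Fin 2 ≃ Option Unit where
  toFun i := if i = 1 then none else some ()
  invFun o := o.elim 1 fun _ => 0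
  left_inv := by decide
  right_inv := by decide

variable (R : Type*) [CommSemiring R]

/-- `R⟦X₀, X₁⟧ ≃ R⟦X₀⟧⟦X₁⟧`. -/
noncomputable def finTwoEquiv : MvPowerSeries (Fin 2) R ≃ₐ[R] PowerSeries (PowerSeries R) :=
  (renameEquiv R finTwoEquivOptionUnit).trans (optionEquivLeft Unit R)

variable {R}

theorem coeff_coeff_finTwoEquiv (P : MvPowerSeries (Fin 2) R) (i j : ℕ) :
    PowerSeries.coeff i (PowerSeries.coeff j (finTwoEquiv R P)) =
      coeff (single 0 i + single 1 j) P := by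
  have : (single () i).optionElim j =
      embDomain finTwoEquivOptionUnit.toEmbedding (single 0 i + single 1 j) := by
    ext o; rcases o with _ | _ <;> simp [finTwoEquivOptionUnit]
  change coeff (single () i) _ = _
  rw [finTwoEquiv, AlgEquiv.trans_apply, coeff_coeff_optionEquivLeft, this, renameEquiv_apply]
  exact coeff_embDomain_rename _ P _

theorem coeff_single_add_single_one_pow (P : MvPowerSeries (Fin 2) R) (i k : ℕ) :
    coeff (single 0 i + single 1 1) (P ^ k) = k * PowerSeries.coeff i
      (PowerSeries.coeff 1 (finTwoEquiv R P) *
        PowerSeries.constantCoeff (finTwoEquiv R P) ^ (k - 1)) := by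
  rw [← coeff_coeff_finTwoEquiv, map_pow, PowerSeries.coeff_one_pow, mul_assoc,
    ← map_natCast (PowerSeries.C (R := R)), PowerSeries.coeff_C_mul]

end MvPowerSeries

namespace PowerSeries

variable {R : Type*} [CommRing R]

theorem mem_range_map_subtype_iff {S : Subring R} {f : PowerSeries R} :
    f ∈ (map S.subtype).range ↔ ∀ n, coeff n f ∈ S := by
  refine ⟨?_, fun h => ⟨mk fun n => ⟨coeff n f, h n⟩, by ext; simp⟩⟩
  rintro ⟨g, rfl⟩ n
  simp

theorem coeff_mul_pow_self {f : PowerSeries R} (hf : constantCoeff f = 0) (g : PowerSeries R)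
    (n : ℕ) : coeff n (g * f ^ n) = constantCoeff g * coeff 1 f ^ n := by
  obtain ⟨h, rfl⟩ := X_dvd_iff.mpr hf
  rw [mul_pow, mul_left_comm, coeff_X_pow_mul', if_pos le_rfl, Nat.sub_self,
    coeff_zero_eq_constantCoeff_apply, map_mul, map_pow, coeff_succ_X_mul 0 h,
    coeff_zero_eq_constantCoeff_apply]

end PowerSeries

namespace DVF

variable {K : Type} [Field K] (V : DVF K)

theorem v_zero : V.v 0 = ⊤ := (V.v_top_iff 0).mpr rfl

theorem ne_zero_of_v_eq_zero {x : K} (hx : V.v x = 0) : x ≠ 0 := fun h => by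
  simp [h, v_zero] at hx

theorem v_one : V.v 1 = 0 := by
  have h : V.v 1 + V.v 1 = V.v 1 + 0 := by rw [add_zero, ← V.v_mul, one_mul]
  exact WithTop.add_left_cancel (fun h1 => one_ne_zero ((V.v_top_iff 1).mp h1)) h

theorem v_neg (x : K) : V.v (-x) = V.v x := by
  have h : V.v (-1) + V.v (-1) = 0 := by rw [← V.v_mul, neg_mul_neg, one_mul, v_one]
  have hne : V.v (-1) ≠ ⊤ := fun h1 => neg_ne_zero.mpr one_ne_zero ((V.v_top_iff _).mp h1)
  lift V.v (-1) to ℤ using hne with n hn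
  have hn0 : n = 0 := by
    have : n + n = 0 := by exact_mod_cast h
    omega
  rw [← neg_one_mul, V.v_mul, ← hn, hn0, WithTop.coe_zero, zero_add]

def integers : Subring K where
  carrier := {x | 0 ≤ V.v x}
  mul_mem' {x y} hx hy := by
    simp only [Set.mem_ofPred_eq, V.v_mul] at *
    exact add_nonneg hx hy
  one_mem' := V.v_one.ge
  add_mem' {x y} hx hy := le_trans (le_min hx hy) (V.v_add x y)
  zero_mem' := by simp [v_zero]
  neg_mem' {x} hx := by simpa [Set.mem_ofPred_eq, v_neg] using hx

theorem mem_integers {x : K} : x ∈ V.integers ↔ 0 ≤ V.v x := Iff.rfl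

theorem inv_mem_integers {x : K} (hx : V.v x = 0) : x⁻¹ ∈ V.integers := by
  have h := V.v_mul x x⁻¹
  rw [mul_inv_cancel₀ (V.ne_zero_of_v_eq_zero hx), v_one, hx, zero_add] at h
  exact h.le

theorem v_natCast_eq_zero {p m : ℕ} (hp : p.Prime) (hres : 0 < V.v (p : K)) (hm : ¬ p ∣ m) :
    V.v (m : K) = 0 := by
  refine ((V.mem_integers.mp (natCast_mem _ m)).eq_of_not_lt fun hlt => ?_).symm
  obtain ⟨u, w, huw⟩ : IsCoprime (p : ℤ) (m : ℤ) :=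
    Int.isCoprime_iff_gcd_eq_one.mpr ((Nat.Prime.coprime_iff_not_dvd hp).mpr hm)
  have hpos : ∀ (c : ℤ) {x : K}, 0 < V.v x → 0 < V.v (c * x) := fun c x hx => by
    rw [V.v_mul]
    exact lt_of_lt_of_le hx (le_add_of_nonneg_left (V.mem_integers.mp (intCast_mem _ c)))
  have h1 : (0 : WithTop ℤ) < V.v 1 := by
    rw [← Int.cast_one, ← huw]
    push_cast
    exact lt_of_lt_of_le (lt_min (hpos u hres) (hpos w hlt)) (V.v_add _ _)
  exact h1.ne' V.v_one

/-- `a O_K ⊆ K`. -/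
def multiples (a : K) : AddSubgroup K :=
  V.integers.toAddSubgroup.map (AddMonoidHom.mulLeft a)

theorem mem_multiples {a x : K} : x ∈ V.multiples a ↔ ∃ c ∈ V.integers, a * c = x :=
  AddSubgroup.mem_map

theorem mul_mem_multiples {a x y : K} (hx : x ∈ V.multiples a) (hy : y ∈ V.integers) :
    x * y ∈ V.multiples a := by
  obtain ⟨c, hc, rfl⟩ := V.mem_multiples.mp hx
  exact V.mem_multiples.mpr ⟨c * y, mul_mem hc hy, (mul_assoc a c y).symm⟩

theorem mem_multiples_of_mul_mem {a x u : K} (hu : V.v u = 0) (h : u * x ∈ V.multiples a) :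
    x ∈ V.multiples a := by
  have := V.mul_mem_multiples h (V.inv_mem_integers hu)
  rwa [mul_comm u, mul_assoc, mul_inv_cancel₀ (V.ne_zero_of_v_eq_zero hu), mul_one] at this

/-- `O_K⟦X⟧ ⊆ K⟦X⟧`. -/
noncomputable def integralSeries : Subring (PowerSeries K) :=
  (PowerSeries.map V.integers.subtype).range

theorem mem_integralSeries {f : PowerSeries K} :
    f ∈ V.integralSeries ↔ ∀ n, PowerSeries.coeff n f ∈ V.integers :=
  PowerSeries.mem_range_map_subtype_iff

end DVF

namespace FGL

open PowerSeries Finsupp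

variable {K : Type} [Field K] {V : DVF K} (Fg : FGL K V)

/-- `F(X, 0)`. -/
noncomputable def restrictYZero : PowerSeries K :=
  constantCoeff (MvPowerSeries.finTwoEquiv K Fg.F)

/-- `∂F/∂Y (X, 0)`. -/
noncomputable def partialYZero : PowerSeries K :=
  coeff 1 (MvPowerSeries.finTwoEquiv K Fg.F)

theorem coeff_restrictYZero (n : ℕ) :
    coeff n Fg.restrictYZero = MvPowerSeries.coeff (single 0 n) Fg.F := by
  rw [restrictYZero, ← coeff_zero_eq_constantCoeff_apply, MvPowerSeries.coeff_coeff_finTwoEquiv,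
    single_zero, add_zero]

theorem coeff_partialYZero (n : ℕ) :
    coeff n Fg.partialYZero = MvPowerSeries.coeff (single 0 n + single 1 1) Fg.F :=
  MvPowerSeries.coeff_coeff_finTwoEquiv _ _ _

theorem constantCoeff_restrictYZero : constantCoeff Fg.restrictYZero = 0 := by
  rw [← coeff_zero_eq_constantCoeff_apply, coeff_restrictYZero, single_zero]
  exact Fg.const

theorem coeff_one_restrictYZero : coeff 1 Fg.restrictYZero = 1 := by
  rw [coeff_restrictYZero]
  exact Fg.linX

theorem constantCoeff_partialYZero : constantCoeff Fg.partialYZero = 1 := by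
  rw [← coeff_zero_eq_constantCoeff_apply, coeff_partialYZero, single_zero, zero_add]
  exact Fg.linY

theorem restrictYZero_mem_integralSeries : Fg.restrictYZero ∈ V.integralSeries :=
  V.mem_integralSeries.mpr fun n => by
    rw [coeff_restrictYZero]
    exact Fg.int_coeff _

theorem partialYZero_mem_integralSeries : Fg.partialYZero ∈ V.integralSeries :=
  V.mem_integralSeries.mpr fun n => by
    rw [coeff_partialYZero]
    exact Fg.int_coeff _

theorem coeff_single_add_single_one_pow (i k : ℕ) :
    MvPowerSeries.coeff (single 0 i + single 1 1) (Fg.F ^ k) =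
      k * coeff i (Fg.partialYZero * Fg.restrictYZero ^ (k - 1)) :=
  MvPowerSeries.coeff_single_add_single_one_pow _ _ _

end FGL

namespace Isog

open PowerSeries Finset
open Finsupp (single)

variable {K : Type} [Field K] {V : DVF K} {Fg Gg : FGL K V} (φ : Isog V Fg Gg)

theorem mem_integralSeries : φ.φ ∈ V.integralSeries :=
  V.mem_integralSeries.mpr φ.int_coeff

theorem constantCoeff_eq_zero : constantCoeff φ.φ = 0 := by
  rw [← coeff_zero_eq_constantCoeff_apply]
  exact φ.const

/-- The coefficient of `X^i Y` in `φ(F(X,Y)) = G(φ(X), φ(Y))`: on the right only the linear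
term `a₁ Y` of `φ(Y)` contributes. -/
theorem sum_coeff_mul_coeff_pow_mem_multiples (i : ℕ) :
    ∑ k ∈ range (i + 1 + 1),
        coeff k φ.φ * MvPowerSeries.coeff (single 0 i + single 1 1) (Fg.F ^ k) ∈
      V.multiples (coeff 1 φ.φ) := by
  rw [φ.hom i 1, V.mem_multiples]
  refine ⟨∑ k ∈ range (i + 1 + 1),
      MvPowerSeries.coeff (single 0 k + single 1 1) Gg.F * coeff i (φ.φ ^ k),
    sum_mem fun k _ => mul_mem (Gg.int_coeff _)
      (V.mem_integralSeries.mp (pow_mem φ.mem_integralSeries k) i), ?_⟩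
  rw [mul_sum]
  refine sum_congr rfl fun k _ => ?_
  rw [sum_eq_single 1 (fun l _ hl => ?_) (by simp)]
  · rw [pow_one]
    ring
  · rcases l with _ | _ | l <;> simp_all [coeff_one_pow, φ.constantCoeff_eq_zero]

theorem natCast_mul_coeff_mem_multiples (n : ℕ) :
    (n : K) * coeff n φ.φ ∈ V.multiples (coeff 1 φ.φ) := by
  induction n using Nat.strong_induction_on with
  | _ n ih =>
    obtain _ | i := n
    · simp
    have hcoeff (k : ℕ) : coeff i (Fg.partialYZero * Fg.restrictYZero ^ (k - 1)) ∈ V.integers :=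
      V.mem_integralSeries.mp
        (mul_mem Fg.partialYZero_mem_integralSeries
          (pow_mem Fg.restrictYZero_mem_integralSeries _)) i
    have hsum := φ.sum_coeff_mul_coeff_pow_mem_multiples i
    simp only [Fg.coeff_single_add_single_one_pow] at hsum
    rw [sum_range_succ] at hsum
    have hlower : ∑ k ∈ range (i + 1),
        coeff k φ.φ * (k * coeff i (Fg.partialYZero * Fg.restrictYZero ^ (k - 1))) ∈
          V.multiples (coeff 1 φ.φ) :=
      sum_mem fun k hk => by
        convert V.mul_mem_multiples (ih k (mem_range.mp hk)) (hcoeff k) using 1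
        ring
    have htop := sub_mem hsum hlower
    rw [add_sub_cancel_left, Nat.add_sub_cancel,
      coeff_mul_pow_self Fg.constantCoeff_restrictYZero, Fg.constantCoeff_partialYZero,
      Fg.coeff_one_restrictYZero, one_pow, mul_one, mul_one] at htop
    rwa [mul_comm] at htop

end Isog

theorem stmt1_general (p : ℕ) (hp : p.Prime) (K : Type) [Field K]
    (V : DVF K) (hres : 0 < V.v (p : K))
    (Fg Gg : FGL K V) (φ : Isog V Fg Gg)
    (m : ℕ) (hm : ¬ p ∣ m) :
    ∃ c : K, 0 ≤ V.v c ∧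
      PowerSeries.coeff m φ.φ = PowerSeries.coeff 1 φ.φ * c := by
  obtain ⟨c, hc, hmc⟩ := V.mem_multiples.mp (V.mem_multiples_of_mul_mem
    (V.v_natCast_eq_zero hp hres hm) (φ.natCast_mul_coeff_mem_multiples m))
  exact ⟨c, hc, hmc.symm⟩

/-- Lemma 2.1 (ii). Let `K` be a complete discrete valuation field of
characteristic 0 with perfect residue field of characteristic `p > 0`, and let
`φ(T) = a₁T + a₂T² + ⋯` be an isogeny of formal groups over `O_K` of height 1.
Then for every `m` with `p ∤ m`, the coefficient `a₁` divides `a_m` in `O_K`. -/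
theorem stmt1 (p : ℕ) (hp : p.Prime) (K : Type) [Field K] [CharZero K]
    (V : DVF K) (hcomp : V.IsComplete) (hres : 0 < V.v (p : K))
    (hperf : V.ResiduePerfect p)
    (Fg Gg : FGL K V) (φ : Isog V Fg Gg) (hht : HasHeight V p 1 φ.φ)
    (m : ℕ) (hm : ¬ p ∣ m) :
    ∃ c : K, 0 ≤ V.v c ∧
      PowerSeries.coeff m φ.φ = PowerSeries.coeff 1 φ.φ * c :=
  stmt1_general p hp K V hres Fg Gg φ m hm
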